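/- arXiv:1104.4180 — 4 statements merged into one kernel-verified Lean document; each statement's English description precedes it below -/
import Mathlib

section
/- If L : ℕᵈ → ℝ \ {0} is slowly varying at infinity (i.e., for every a ∈ ℕᵈ with positive coordinates, L(a₁x₁,…,a_d x_d)/L(x₁,…,x_d) → 1 as all xₖ → ∞) and L is nondecreasing in each coordinate, then the function H : ℝ₊ᵈ → ℝ defined by H(x) = L(⌊x₁ ∨ 1⌋, …, ⌊x_d ∨ 1⌋) is slowly varying at infinity on ℝ₊ᵈ, i.e., for every a ∈ ℝᵈ with positive coordinates, H(a₁x₁,…,a_d x_d)/H(x₁,…,x_d) → 1 as all xₖ → ∞. -/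
open MeasureTheory Filter ProbabilityTheory
open scoped Classical BigOperators

/-- Covariance of two real random variables. -/
noncomputable def cov {Ω : Type*} [MeasurableSpace Ω] (μ : Measure Ω) (X Y : Ω → ℝ) : ℝ :=
  ∫ ω, (X ω - ∫ ω', X ω' ∂μ) * (Y ω - ∫ ω', Y ω' ∂μ) ∂μ

/-- Variance of a real random variable. -/
noncomputable def var {Ω : Type*} [MeasurableSpace Ω] (μ : Measure Ω) (X : Ω → ℝ) : ℝ :=
  cov μ X X

/-- Positive (weak) association of a family of real random variables: for all finite
disjoint index sets and all bounded coordinatewise nondecreasing Lipschitz functions,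
the covariance is nonnegative. -/
def PosAssoc {Ω ι : Type*} [MeasurableSpace Ω] (μ : Measure Ω) (X : ι → Ω → ℝ) : Prop :=
  ∀ (I J : Finset ι), Disjoint I J →
    ∀ (f : (I → ℝ) → ℝ) (g : (J → ℝ) → ℝ),
      Monotone f → Monotone g →
      (∃ K, LipschitzWith K f) → (∃ K, LipschitzWith K g) →
      (∃ C, ∀ y, |f y| ≤ C) → (∃ C, ∀ y, |g y| ≤ C) →
      0 ≤ cov μ (fun ω => f fun i => X i ω) (fun ω => g fun j => X j ω)

/-- `L : ℕ^d → ℝ` is slowly varying at infinity. -/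
def SlowlyVarying (d : ℕ) (L : (Fin d → ℕ) → ℝ) : Prop :=
  ∀ a : Fin d → ℕ, (∀ k, 0 < a k) →
    Tendsto (fun x : Fin d → ℕ => L (fun k => a k * x k) / L x) atTop (nhds 1)

/-- `K : ℕ → ℝ` is slowly varying at infinity. -/
def SlowlyVarying1 (K : ℕ → ℝ) : Prop :=
  ∀ a : ℕ, 0 < a → Tendsto (fun r : ℕ => K (a * r) / K r) atTop (nhds 1)

/-- Uniform integrability of a family of random variables. -/
def UnifInt {Ω ι : Type*} [MeasurableSpace Ω] (μ : Measure Ω) (Y : ι → Ω → ℝ) : Prop :=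
  ∀ ε : ℝ, 0 < ε → ∃ c : ℝ, ∀ i, ∫ ω in {ω | c ≤ |Y i ω|}, |Y i ω| ∂μ ≤ ε

/-- Strict stationarity of a random field on ℤ^d. -/
def StrictStationary {Ω : Type*} [MeasurableSpace Ω] (μ : Measure Ω) {d : ℕ}
    (X : (Fin d → ℤ) → Ω → ℝ) : Prop :=
  ∀ (k : ℕ) (j : Fin k → (Fin d → ℤ)) (u : Fin d → ℤ),
    Measure.map (fun ω (i : Fin k) => X (j i + u) ω) μ =
      Measure.map (fun ω (i : Fin k) => X (j i) ω) μ

/-- The block `U_n = {j ∈ ℤ^d : 1 ≤ j ≤ n}`. -/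
noncomputable def blockU {d : ℕ} (n : Fin d → ℕ) : Finset (Fin d → ℤ) :=
  Finset.Icc (fun _ => 1) (fun k => (n k : ℤ))

/-- Partial sum of the field over the block `U_n`. -/
noncomputable def partialSum {Ω : Type*} {d : ℕ} (X : (Fin d → ℤ) → Ω → ℝ)
    (n : Fin d → ℕ) (ω : Ω) : ℝ :=
  ∑ j ∈ blockU n, X j ω

/-- `K_X(n) = Σ_{-n ≤ j ≤ n} R(j)` (sup-norm blocks). -/
noncomputable def KsumF {d : ℕ} (R : (Fin d → ℤ) → ℝ) (n : Fin d → ℕ) : ℝ :=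
  ∑ j ∈ Finset.Icc (fun k => -(n k : ℤ)) (fun k => (n k : ℤ)), R j

/-- `K(r) = Σ_{‖j‖ ≤ r} R(j)` (Euclidean balls). -/
noncomputable def Keucl {d : ℕ} (R : (Fin d → ℤ) → ℝ) (r : ℕ) : ℝ :=
  ∑ j ∈ (Finset.Icc (fun _ => -(r : ℤ)) (fun _ => (r : ℤ))).filter
      (fun j => Real.sqrt (∑ k, ((j k : ℝ)) ^ 2) ≤ (r : ℝ)), R j

/-
If `u` and `v` tend to infinity and agree up to a constant factor `c`, then `m = u ⊓ v` satisfies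
`m ≤ u, v ≤ c * m`, so monotonicity sandwiches `L u / L m` and `L v / L m` between `1` and
`L (c * m) / L m → 1`. This applies to `⌊max (a x) 1⌋₊` and `⌊max x 1⌋₊`, which agree up to the
factor `2 ⌈max a a⁻¹⌉₊` in each coordinate.
-/

open Topology

theorem Filter.tendsto_pi_atTop_of_forall {β ι : Type*} [Finite ι] {α : ι → Type*}
    [∀ i, Preorder (α i)] {l : Filter β} {u : β → ∀ i, α i}
    (h : ∀ i, Tendsto (fun x => u x i) l atTop) : Tendsto u l atTop :=
  tendsto_atTop.2 fun b => eventually_all.2 fun i => tendsto_atTop.1 (h i) (b i)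

theorem Filter.tendsto_eval_atTop {ι α : Type*} [Preorder α] (i : ι) :
    Tendsto (fun x : ι → α => x i) atTop atTop :=
  tendsto_atTop_atTop_of_monotone (Function.monotone_eval i) fun b => ⟨fun _ => b, le_rfl⟩

theorem tendsto_div_of_le_of_le {β : Type*} {l : Filter β} {f g h : β → ℝ}
    (hfg : ∀ᶠ x in l, f x ≤ g x) (hgh : ∀ᶠ x in l, g x ≤ h x)
    (hlim : Tendsto (fun x => h x / f x) l (𝓝 1)) :
    Tendsto (fun x => g x / f x) l (𝓝 1) := by
  have key : ∀ᶠ x in l, ‖g x / f x - 1‖ ≤ ‖h x / f x - 1‖ := by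
    filter_upwards [hfg, hgh] with x hfg hgh
    rcases eq_or_ne (f x) 0 with hf | hf
    · simp [hf]
    rw [div_sub_one hf, div_sub_one hf, norm_div, norm_div]
    gcongr
    rw [Real.norm_of_nonneg (by linarith), Real.norm_of_nonneg (by linarith)]
    linarith
  rw [tendsto_iff_norm_sub_tendsto_zero] at hlim ⊢
  exact squeeze_zero' (.of_forall fun _ => norm_nonneg _) key hlim

namespace SlowlyVarying

variable {d : ℕ} {L : (Fin d → ℕ) → ℝ} {β : Type*} {l : Filter β}

theorem tendsto_div_of_le_mul (hsv : SlowlyVarying d L) (hmono : Monotone L)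
    {m u : β → Fin d → ℕ} {c : Fin d → ℕ} (hc : ∀ k, 0 < c k) (hm : Tendsto m l atTop)
    (hmu : ∀ᶠ x in l, m x ≤ u x) (huc : ∀ᶠ x in l, u x ≤ c * m x) :
    Tendsto (fun x => L (u x) / L (m x)) l (𝓝 1) :=
  tendsto_div_of_le_of_le (hmu.mono fun _ h => hmono h) (huc.mono fun _ h => hmono h)
    ((hsv c hc).comp hm)

theorem tendsto_div_of_le_mul_of_le_mul (hsv : SlowlyVarying d L) (hmono : Monotone L)
    {u v : β → Fin d → ℕ} {c : Fin d → ℕ} (hc : ∀ k, 0 < c k)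
    (hu : Tendsto u l atTop) (hv : Tendsto v l atTop)
    (huv : ∀ᶠ x in l, u x ≤ c * v x) (hvu : ∀ᶠ x in l, v x ≤ c * u x) :
    Tendsto (fun x => L (u x) / L (v x)) l (𝓝 1) := by
  have hle_mul : ∀ w w' : Fin d → ℕ, w ≤ c * w' → w ≤ c * (w ⊓ w') := fun w w' h k => by
    change w k ≤ c k * min (w k) (w' k)
    rw [mul_min_of_nonneg _ _ (Nat.zero_le (c k))]
    exact le_min (Nat.le_mul_of_pos_left _ (hc k)) (h k)
  have hm := tendsto_inf_atTop l hu hv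
  have hum := hsv.tendsto_div_of_le_mul hmono hc hm (.of_forall fun _ => inf_le_left)
    (huv.mono fun _ h => hle_mul _ _ h)
  have hvm := hsv.tendsto_div_of_le_mul hmono hc hm (.of_forall fun _ => inf_le_right)
    (hvu.mono fun x h => inf_comm (v x) (u x) ▸ hle_mul _ _ h)
  have hLm : ∀ᶠ x in l, L (u x ⊓ v x) ≠ 0 :=
    (hum.eventually_ne one_ne_zero).mono fun _ h => (div_ne_zero_iff.1 h).2
  simpa using (hum.div hvm one_ne_zero).congr'
    (hLm.mono fun _ h => div_div_div_cancel_right₀ h _ _)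

end SlowlyVarying

theorem max_mul_one_le_max_inv_mul {a : ℝ} (ha : 0 < a) (x : ℝ) :
    max (a * x) 1 ≤ max a a⁻¹ * max x 1 := by
  have hC : 1 ≤ max a a⁻¹ := by
    rcases le_total 1 a with h | h
    · exact le_max_of_le_left h
    · exact le_max_of_le_right (one_le_inv₀ ha |>.2 h)
  refine max_le ?_ (one_le_mul_of_one_le_of_one_le hC (le_max_right _ _))
  calc a * x ≤ a * max x 1 := by gcongr; exact le_max_left _ _
    _ ≤ max a a⁻¹ * max x 1 := by gcongr; exact le_max_left _ _

theorem Nat.floor_le_two_mul_ceil_mul_floor {y z c : ℝ} (hy : 1 ≤ y) (hz : z ≤ c * y) :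
    ⌊z⌋₊ ≤ 2 * ⌈c⌉₊ * ⌊y⌋₊ := by
  rcases lt_or_ge z 0 with hz0 | hz0
  · simp [Nat.floor_of_nonpos hz0.le]
  have hy2 : y ≤ 2 * ⌊y⌋₊ := by
    have := Nat.lt_floor_add_one y
    have : (1 : ℝ) ≤ ⌊y⌋₊ := by exact_mod_cast Nat.one_le_floor_iff _ |>.2 hy
    linarith
  have : (⌊z⌋₊ : ℝ) ≤ 2 * ⌈c⌉₊ * ⌊y⌋₊ :=
    calc (⌊z⌋₊ : ℝ) ≤ z := Nat.floor_le hz0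
      _ ≤ c * y := hz
      _ ≤ ⌈c⌉₊ * y := by gcongr; exact Nat.le_ceil c
      _ ≤ ⌈c⌉₊ * (2 * ⌊y⌋₊) := by gcongr
      _ = 2 * ⌈c⌉₊ * ⌊y⌋₊ := by ring
  exact_mod_cast this

theorem tendsto_floor_max_mul_one_atTop {ι : Type*} [Finite ι] {a : ι → ℝ} (ha : ∀ k, 0 < a k) :
    Tendsto (fun x : ι → ℝ => fun k => ⌊max (a k * x k) 1⌋₊) atTop atTop :=
  tendsto_pi_atTop_of_forall fun k => tendsto_nat_floor_atTop.comp <|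
    tendsto_atTop_mono (fun _ => le_max_left _ _) ((tendsto_eval_atTop k).const_mul_atTop (ha k))

theorem stmt0_general {d : ℕ} (L : (Fin d → ℕ) → ℝ)
    (hsv : SlowlyVarying d L) (hmono : Monotone L) :
    ∀ a : Fin d → ℝ, (∀ k, 0 < a k) →
      Tendsto (fun x : Fin d → ℝ =>
          L (fun k => ⌊max (a k * x k) 1⌋₊) / L (fun k => ⌊max (x k) 1⌋₊))
        atTop (nhds 1) := by
  intro a ha
  refine hsv.tendsto_div_of_le_mul_of_le_mul hmono (c := fun k => 2 * ⌈max (a k) (a k)⁻¹⌉₊)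
    (fun k => by have := ha k; positivity) (tendsto_floor_max_mul_one_atTop ha)
    (by simpa using tendsto_floor_max_mul_one_atTop (ι := Fin d) fun _ => one_pos)
    (.of_forall fun x k => ?_) (.of_forall fun x k => ?_)
  · exact Nat.floor_le_two_mul_ceil_mul_floor (le_max_right _ _)
      (max_mul_one_le_max_inv_mul (ha k) (x k))
  · have h := max_mul_one_le_max_inv_mul (inv_pos.2 (ha k)) (a k * x k)
    rw [inv_mul_cancel_left₀ (ha k).ne', inv_inv, max_comm (a k)⁻¹] at h
    exact Nat.floor_le_two_mul_ceil_mul_floor (le_max_right _ _) h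

/-- a coordinatewise nondecreasing slowly varying `L : ℕ^d → ℝ \ {0}` extends to
the slowly varying function `H(x) = L(⌊x ∨ 1⌋)` on ℝ₊^d. -/
theorem stmt0 {d : ℕ} (L : (Fin d → ℕ) → ℝ) (hL0 : ∀ x, L x ≠ 0)
    (hsv : SlowlyVarying d L) (hmono : Monotone L) :
    ∀ a : Fin d → ℝ, (∀ k, 0 < a k) →
      Tendsto (fun x : Fin d → ℝ =>
          L (fun k => ⌊max (a k * x k) 1⌋₊) / L (fun k => ⌊max (x k) 1⌋₊))
        atTop (nhds 1) :=
  stmt0_general L hsv hmono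
end

section
/- Let L : ℕᵈ → ℝ \ {0} be slowly varying at infinity and nondecreasing in each coordinate. Then there exist vectors q_n = (q_n⁽¹⁾,…,q_n⁽ᵈ⁾) ∈ ℕᵈ, indexed by n = (n₁,…,n_d) ∈ ℕᵈ, such that: (i) q_n⁽ᵏ⁾ ≤ n_k for all k; (ii) q_n⁽ᵏ⁾/n_k → 0 for each k as n → ∞; (iii) each q_n⁽ᵏ⁾ → ∞ as n → ∞; and (iv) L(n)/L(q_n) → 1 as n → ∞ (meaning all coordinates n₁,…,n_d tend to infinity). -/
/-!
Slow variation gives, for every `m ≥ 1`, a threshold `B m ≥ m` beyond which `L (m • x) / L x` is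
within `1/m` of `1`. Let `M n` be the largest `m` with `m * B m ≤ min_k n_k`; it tends to infinity
with `n`, and `q n = ⌈n / M n⌉₊` satisfies `B (M n) ≤ q n ≤ n ≤ M n • q n`. By monotonicity
`L n / L (q n)` is squeezed between `1` and `L (M n • q n) / L (q n)`, which is within `1 / M n`
of `1`.
-/

open MeasureTheory Filter ProbabilityTheory
open scoped Classical BigOperators

open Topology

def growthInverse (T : ℕ → ℕ) (r : ℕ) : ℕ :=
  Nat.findGreatest (fun m => T m ≤ r) r

theorem growthInverse_spec (T : ℕ → ℕ) {r : ℕ} (h : T 0 ≤ r) : T (growthInverse T r) ≤ r :=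
  Nat.findGreatest_spec (P := fun m => T m ≤ r) r.zero_le h

theorem tendsto_growthInverse (T : ℕ → ℕ) : Tendsto (growthInverse T) atTop atTop := by
  refine tendsto_atTop.2 fun b => ?_
  filter_upwards [eventually_ge_atTop (max b (T b))] with r hr
  exact Nat.le_findGreatest (le_of_max_le_left hr) (le_of_max_le_right hr)

section MinCoord

variable {ι : Type*} [Fintype ι] [Nonempty ι]

def minCoord (n : ι → ℕ) : ℕ :=
  Finset.univ.inf' Finset.univ_nonempty n

theorem le_minCoord_iff {c : ℕ} {n : ι → ℕ} : c ≤ minCoord n ↔ ∀ k, c ≤ n k := by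
  simp [minCoord, Finset.le_inf'_iff]

theorem tendsto_minCoord : Tendsto (minCoord : (ι → ℕ) → ℕ) atTop atTop :=
  tendsto_atTop_atTop_of_monotone
    (fun _ _ h => le_minCoord_iff.2 fun k => (le_minCoord_iff.1 le_rfl k).trans (h k))
    fun c => ⟨fun _ => c, le_minCoord_iff.2 fun _ => le_rfl⟩

end MinCoord

theorem natCeil_div_le_self (n M : ℕ) : ⌈(n : ℝ) / M⌉₊ ≤ n := by
  rcases M.eq_zero_or_pos with rfl | hM
  · simp
  · exact Nat.ceil_le.2 (div_le_self n.cast_nonneg (by exact_mod_cast hM))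

theorem le_mul_natCeil_div (n : ℕ) {M : ℕ} (hM : 0 < M) : n ≤ M * ⌈(n : ℝ) / M⌉₊ := by
  have hM' : (0 : ℝ) < M := by exact_mod_cast hM
  have := (div_le_iff₀' hM').1 (Nat.le_ceil ((n : ℝ) / M))
  exact_mod_cast this

theorem le_natCeil_div_of_mul_le {c n M : ℕ} (hM : 0 < M) (h : M * c ≤ n) :
    c ≤ ⌈(n : ℝ) / M⌉₊ := by
  have hM' : (0 : ℝ) < M := by exact_mod_cast hM
  have : (c : ℝ) ≤ n / M := (le_div_iff₀' hM').2 (by exact_mod_cast h)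
  exact_mod_cast this.trans (Nat.le_ceil _)

theorem natCeil_div_div_le {n M : ℕ} (hn : 0 < n) (hM : 0 < M) :
    (⌈(n : ℝ) / M⌉₊ : ℝ) / n ≤ (M : ℝ)⁻¹ + (n : ℝ)⁻¹ := by
  have hn' : (0 : ℝ) < n := by exact_mod_cast hn
  have hM' : (0 : ℝ) < M := by exact_mod_cast hM
  calc (⌈(n : ℝ) / M⌉₊ : ℝ) / n ≤ ((n : ℝ) / M + 1) / n := by
        gcongr; exact (Nat.ceil_lt_add_one (by positivity)).le
    _ = (M : ℝ)⁻¹ + (n : ℝ)⁻¹ := by field_simp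

theorem abs_div_sub_one_le_of_le_of_le {a b c : ℝ} (hba : b ≤ a) (hac : a ≤ c) :
    |a / b - 1| ≤ |c / b - 1| := by
  rcases eq_or_ne b 0 with rfl | hb
  · simp -- with `b = 0` both sides are `|0 - 1|`
  rw [div_sub_one hb, div_sub_one hb, abs_div, abs_div, abs_of_nonneg (sub_nonneg.2 hba),
    abs_of_nonneg (show 0 ≤ c - b by linarith)]
  gcongr

section Coarsening

variable {ι : Type*} [Fintype ι] [Nonempty ι] (B : ℕ → ℕ)

def coarseningScale (n : ι → ℕ) : ℕ :=
  growthInverse (fun m => m * B m) (minCoord n)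

noncomputable def coarsening (n : ι → ℕ) : ι → ℕ :=
  fun k => ⌈(n k : ℝ) / coarseningScale B n⌉₊

theorem coarsening_le (n : ι → ℕ) (k : ι) : coarsening B n k ≤ n k :=
  natCeil_div_le_self _ _

theorem tendsto_coarseningScale : Tendsto (coarseningScale B : (ι → ℕ) → ℕ) atTop atTop :=
  (tendsto_growthInverse _).comp tendsto_minCoord

theorem coarseningScale_mul_le (n : ι → ℕ) (k : ι) :
    coarseningScale B n * B (coarseningScale B n) ≤ n k :=
  le_minCoord_iff.1 (growthInverse_spec (fun m => m * B m) (by simp only [zero_mul, zero_le])) k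

theorem le_coarseningScale_mul_coarsening {n : ι → ℕ} (hn : 0 < coarseningScale B n) (k : ι) :
    n k ≤ coarseningScale B n * coarsening B n k :=
  le_mul_natCeil_div _ hn

theorem le_coarsening {n : ι → ℕ} (hn : 0 < coarseningScale B n) (k : ι) :
    B (coarseningScale B n) ≤ coarsening B n k :=
  le_natCeil_div_of_mul_le hn (coarseningScale_mul_le B n k)

theorem tendsto_coarsening_div (k : ι) :
    Tendsto (fun n : ι → ℕ => (coarsening B n k : ℝ) / n k) atTop (𝓝 0) := by
  have hM := (tendsto_natCast_atTop_atTop (R := ℝ)).comp (tendsto_coarseningScale B (ι := ι))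
  have hk : Tendsto (fun n : ι → ℕ => n k) atTop atTop :=
    tendsto_atTop_atTop_of_monotone (fun _ _ h => h k) fun c => ⟨fun _ => c, le_rfl⟩
  have hbound := (tendsto_inv_atTop_zero.comp hM).add
    (tendsto_inv_atTop_zero.comp ((tendsto_natCast_atTop_atTop (R := ℝ)).comp hk))
  rw [add_zero] at hbound
  refine squeeze_zero' (.of_forall fun _ => by positivity) ?_ hbound
  filter_upwards [(tendsto_coarseningScale B).eventually_gt_atTop 0, hk.eventually_gt_atTop 0]
    with n hMn hnk
  exact natCeil_div_div_le hnk hMn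

theorem tendsto_coarsening (hB : ∀ m, m ≤ B m) :
    Tendsto (coarsening B : (ι → ℕ) → ι → ℕ) atTop atTop := by
  refine tendsto_atTop.2 fun b => ?_
  filter_upwards [(tendsto_coarseningScale B).eventually_ge_atTop (max 1 (Finset.univ.sup b))]
    with n hn k
  calc b k ≤ Finset.univ.sup b := Finset.le_sup (Finset.mem_univ k)
    _ ≤ coarseningScale B n := le_of_max_le_right hn
    _ ≤ B (coarseningScale B n) := hB _
    _ ≤ coarsening B n k := le_coarsening B (le_of_max_le_left hn) k

end Coarsening

theorem SlowlyVarying.eventually_abs_sub_one_lt {d : ℕ} {L : (Fin d → ℕ) → ℝ}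
    (hL : SlowlyVarying d L) {m : ℕ} (hm : 0 < m) {ε : ℝ} (hε : 0 < ε) :
    ∀ᶠ N in atTop, ∀ x : Fin d → ℕ, (∀ k, N ≤ x k) → |L (fun k => m * x k) / L x - 1| < ε := by
  obtain ⟨a, ha⟩ := eventually_atTop.1 (Metric.tendsto_nhds.1 (hL _ fun _ => hm) ε hε)
  filter_upwards [eventually_ge_atTop (Finset.univ.sup a)] with N hN x hx
  simpa [Real.dist_eq] using
    ha x fun k => (Finset.le_sup (Finset.mem_univ k)).trans (hN.trans (hx k))

theorem stmt1_general {d : ℕ} (L : (Fin d → ℕ) → ℝ)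
    (hsv : SlowlyVarying d L) (hmono : Monotone L) :
    ∃ q : (Fin d → ℕ) → (Fin d → ℕ),
      (∀ n k, q n k ≤ n k) ∧
      (∀ k, Tendsto (fun n : Fin d → ℕ => (q n k : ℝ) / (n k : ℝ)) atTop (nhds 0)) ∧
      Tendsto (fun n : Fin d → ℕ => q n) atTop atTop ∧
      Tendsto (fun n : Fin d → ℕ => L n / L (q n)) atTop (nhds 1) := by
  rcases isEmpty_or_nonempty (Fin d) with _ | _
  · refine ⟨id, fun _ _ => le_rfl, fun k => isEmptyElim k, tendsto_id, ?_⟩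
    simpa using hsv 1 fun _ => one_pos
  have hthreshold : ∀ m : ℕ, ∃ N, m ≤ N ∧ (0 < m → ∀ x : Fin d → ℕ, (∀ k, N ≤ x k) →
      |L (fun k => m * x k) / L x - 1| < (m : ℝ)⁻¹) := by
    intro m
    rcases m.eq_zero_or_pos with rfl | hm
    · exact ⟨0, le_rfl, fun h => (lt_irrefl 0 h).elim⟩
    · have hε : (0 : ℝ) < (m : ℝ)⁻¹ := inv_pos.2 (Nat.cast_pos.2 hm)
      obtain ⟨N, hN, hmN⟩ :=
        ((hsv.eventually_abs_sub_one_lt hm hε).and (eventually_ge_atTop m)).exists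
      exact ⟨N, hmN, fun _ => hN⟩
  choose B hBge hB using hthreshold
  refine ⟨coarsening B, coarsening_le B, tendsto_coarsening_div B, tendsto_coarsening B hBge, ?_⟩
  have hM := tendsto_coarseningScale B (ι := Fin d)
  refine tendsto_iff_norm_sub_tendsto_zero.2 (squeeze_zero' (.of_forall fun _ => norm_nonneg _)
    ?_ (tendsto_inv_atTop_zero.comp (tendsto_natCast_atTop_atTop.comp hM)))
  filter_upwards [hM.eventually_gt_atTop 0] with n hn
  calc ‖L n / L (coarsening B n) - 1‖
      ≤ |L (fun k => coarseningScale B n * coarsening B n k) / L (coarsening B n) - 1| :=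
        abs_div_sub_one_le_of_le_of_le (hmono (coarsening_le B n))
          (hmono (le_coarseningScale_mul_coarsening B hn))
    _ ≤ (coarseningScale B n : ℝ)⁻¹ := (hB _ hn _ (le_coarsening B hn)).le

/-- for a coordinatewise nondecreasing slowly varying `L : ℕ^d → ℝ \ {0}` there
are indices `q_n ≤ n` with `q_n/n → 0`, `q_n → ∞` and `L(n)/L(q_n) → 1`. -/
theorem stmt1 {d : ℕ} (L : (Fin d → ℕ) → ℝ) (hL0 : ∀ x, L x ≠ 0)
    (hsv : SlowlyVarying d L) (hmono : Monotone L) :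
    ∃ q : (Fin d → ℕ) → (Fin d → ℕ),
      (∀ n k, q n k ≤ n k) ∧
      (∀ k, Tendsto (fun n : Fin d → ℕ => (q n k : ℝ) / (n k : ℝ)) atTop (nhds 0)) ∧
      Tendsto (fun n : Fin d → ℕ => q n) atTop atTop ∧
      Tendsto (fun n : Fin d → ℕ => L n / L (q n)) atTop (nhds 1) :=
  stmt1_general L hsv hmono
end

section
/- Let X = {X_j, j ∈ ℤᵈ} be a wide-sense stationary random field with nonnegative covariance function R(m) = cov(X_0, X_m), and let K_X(n) = Σ_{−n ≤ j ≤ n} R(j) for n ∈ ℕᵈ. If K_X is slowly varying at infinity on ℕᵈ, then Var S(U_n) / (n₁⋯n_d · K_X(n)) → 1 as n → ∞, where U_n = {j ∈ ℤᵈ : 1 ≤ j ≤ n} and S(U_n) = Σ_{j ∈ U_n} X_j. -/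
open MeasureTheory Filter ProbabilityTheory
open scoped Classical BigOperators

/-!
Expand `Var S(U_n) = ∑_{i,j ∈ U_n} R(i - j)`. Since `R ≥ 0`, each inner sum `∑_j R(i - j)` is at
most `K_X(n)`, as the differences `i - j` stay in `[-n, n]`, and at least `K_X(m)` when `i` lies in
the inner box `[m + 1, n - m]`, as they then cover `[-m, m]`. Hence
`∏ₖ (nₖ - 2mₖ) K_X(m) ≤ Var S(U_n) ≤ ⟨n⟩ K_X(n)`. With `m = ⌊n / a⌋` the product is at least
`(1 - 2/a)^d ⟨n⟩`, and by monotonicity `K_X(m) / K_X(n) ≥ K_X(m) / K_X(2a m) → 1` by slow variation;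
letting `a → ∞` gives the lower bound `1`.
-/

open Finset Topology

lemma var_sum_eq_sum_sum_cov {Ω ι : Type*} [MeasurableSpace Ω] (μ : Measure Ω)
    [IsFiniteMeasure μ] (s : Finset ι) (X : ι → Ω → ℝ) (hX : ∀ i, MemLp (X i) 2 μ) :
    var μ (fun ω => ∑ i ∈ s, X i ω) = ∑ i ∈ s, ∑ j ∈ s, cov μ (X i) (X j) :=
  covariance_fun_sum_fun_sum' (fun i _ => hX i) (fun i _ => hX i)

lemma sum_comp_sub_le_sum {G : Type*} [AddCommGroup G] {f : G → ℝ} (hf : ∀ x, 0 ≤ f x)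
    {s t : Finset G} {i : G} (hst : ∀ j ∈ s, i - j ∈ t) :
    ∑ j ∈ s, f (i - j) ≤ ∑ x ∈ t, f x := by
  rw [← sum_image fun _ _ _ _ h => sub_right_injective h]
  exact sum_le_sum_of_subset_of_nonneg (by simpa [Finset.subset_iff] using hst)
    fun x _ _ => hf x

lemma one_sub_two_div_nonneg {a : ℕ} (ha : 2 ≤ a) : (0 : ℝ) ≤ 1 - 2 / a := by
  rw [sub_nonneg, div_le_one (by positivity)]
  exact_mod_cast ha

lemma one_sub_two_div_mul_le_sub {a : ℕ} (ha : 2 ≤ a) (n : ℕ) :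
    (1 - 2 / a) * (n : ℝ) ≤ n - 2 * (n / a : ℕ) := by
  have hapos : (0 : ℝ) < a := by positivity
  have hdiv : ((n / a : ℕ) : ℝ) ≤ n / a := by
    rw [le_div_iff₀ hapos]; exact_mod_cast Nat.div_mul_le_self n a
  calc (1 - 2 / a) * (n : ℝ) = n - 2 * (n / a) := by ring
    _ ≤ n - 2 * (n / a : ℕ) := by linarith

lemma pow_mul_prod_le_prod_sub {d a : ℕ} (ha : 2 ≤ a) (n : Fin d → ℕ) :
    (1 - 2 / a) ^ d * ∏ k, (n k : ℝ) ≤ ∏ k, ((n k : ℝ) - 2 * (n k / a : ℕ)) := by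
  calc (1 - 2 / a) ^ d * ∏ k, (n k : ℝ) = ∏ k, (1 - 2 / a) * (n k : ℝ) := by
        simp [prod_mul_distrib]
    _ ≤ ∏ k, ((n k : ℝ) - 2 * (n k / a : ℕ)) :=
        prod_le_prod (fun k _ => mul_nonneg (one_sub_two_div_nonneg ha) (Nat.cast_nonneg _))
          fun k _ => one_sub_two_div_mul_le_sub ha (n k)

lemma le_two_mul_mul_div {a n : ℕ} (han : a ≤ n) (ha : 0 < a) : n ≤ 2 * a * (n / a) := by
  have h1 := Nat.lt_mul_div_succ n ha
  have h2 : 1 ≤ n / a := (Nat.one_le_div_iff ha).2 han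
  nlinarith

lemma tendsto_one_sub_two_div_pow (d : ℕ) :
    Tendsto (fun a : ℕ => (1 - 2 / a : ℝ) ^ d) atTop (𝓝 1) := by
  simpa using
    ((tendsto_const_nhds (x := (1 : ℝ))).sub (tendsto_const_div_atTop_nhds_zero_nat 2)).pow d

lemma tendsto_div_const_pi_atTop {ι : Type*} {a : ℕ} (ha : 0 < a) :
    Tendsto (fun (n : ι → ℕ) k => n k / a) atTop atTop := by
  refine tendsto_atTop.2 fun b => ?_
  filter_upwards [eventually_ge_atTop (a • b)] with n hn k
  exact (Nat.le_div_iff_mul_le ha).2 (by simpa [mul_comm] using hn k)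

namespace SlowlyVarying

variable {d : ℕ} {L : (Fin d → ℕ) → ℝ}

lemma eventually_ne_zero (hL : SlowlyVarying d L) : ∀ᶠ x in atTop, L x ≠ 0 := by
  filter_upwards [(hL (fun _ => 2) fun _ => two_pos).eventually_ne one_ne_zero] with x hx h0
  simp [h0] at hx

lemma tendsto_div_comp_div (hL : SlowlyVarying d L) {a b : ℕ} (ha : 0 < a) (hb : 0 < b) :
    Tendsto (fun n : Fin d → ℕ => L (fun k => n k / a) / L (fun k => b * (n k / a)))
      atTop (𝓝 1) := by
  simpa using ((hL (fun _ => b) fun _ => hb).comp (tendsto_div_const_pi_atTop ha)).inv₀ one_ne_zero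

end SlowlyVarying

section BlockSums

variable {d : ℕ}

lemma mem_blockU {n : Fin d → ℕ} {j : Fin d → ℤ} :
    j ∈ blockU n ↔ ∀ k, 1 ≤ j k ∧ j k ≤ n k := by
  simp only [blockU, mem_Icc, Pi.le_def, forall_and]

lemma card_blockU (n : Fin d → ℕ) : #(blockU n) = ∏ k, n k := by
  simp [blockU, Pi.card_Icc]

variable {R : (Fin d → ℤ) → ℝ}

lemma KsumF_nonneg (hR : ∀ m, 0 ≤ R m) (n : Fin d → ℕ) : 0 ≤ KsumF R n :=
  sum_nonneg fun j _ => hR j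

lemma KsumF_mono (hR : ∀ m, 0 ≤ R m) : Monotone (KsumF R) := fun _ _ hmn =>
  sum_le_sum_of_subset_of_nonneg
    (Icc_subset_Icc (fun k => neg_le_neg (Int.ofNat_le.2 (hmn k))) fun k => Int.ofNat_le.2 (hmn k))
    fun j _ _ => hR j

lemma sum_blockU_sub_le_KsumF (hR : ∀ m, 0 ≤ R m) {n : Fin d → ℕ} {i : Fin d → ℤ}
    (hi : i ∈ blockU n) : ∑ j ∈ blockU n, R (i - j) ≤ KsumF R n := by
  refine sum_comp_sub_le_sum hR fun j hj => ?_
  rw [mem_blockU] at hi hj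
  simp only [mem_Icc, Pi.le_def, Pi.sub_apply]
  exact ⟨fun k => by linarith [(hi k).1, (hj k).2], fun k => by linarith [(hi k).2, (hj k).1]⟩

lemma KsumF_le_sum_blockU_sub (hR : ∀ m, 0 ≤ R m) {m n : Fin d → ℕ} {i : Fin d → ℤ}
    (hi : ∀ k, m k < i k ∧ i k ≤ n k - m k) :
    KsumF R m ≤ ∑ j ∈ blockU n, R (i - j) := by
  have h := sum_comp_sub_le_sum (f := fun j => R (i - j)) (fun j => hR _)
    (s := Icc (fun k => -(m k : ℤ)) fun k => (m k : ℤ)) (t := blockU n) (i := i)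
    fun j hj => ?_
  · simpa only [sub_sub_cancel, KsumF] using h
  simp only [mem_Icc, Pi.le_def] at hj
  rw [mem_blockU]
  simp only [Pi.sub_apply]
  exact fun k => ⟨by linarith [(hi k).1, hj.2 k], by linarith [(hi k).2, hj.1 k]⟩

lemma sum_blockU_sub_le (hR : ∀ m, 0 ≤ R m) (n : Fin d → ℕ) :
    ∑ i ∈ blockU n, ∑ j ∈ blockU n, R (i - j) ≤ (∏ k, (n k : ℝ)) * KsumF R n := by
  calc ∑ i ∈ blockU n, ∑ j ∈ blockU n, R (i - j) ≤ ∑ _i ∈ blockU n, KsumF R n :=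
        sum_le_sum fun i hi => sum_blockU_sub_le_KsumF hR hi
    _ = (∏ k, (n k : ℝ)) * KsumF R n := by simp [card_blockU]

lemma prod_sub_two_mul_mul_KsumF_le (hR : ∀ m, 0 ≤ R m) {m n : Fin d → ℕ} (hmn : 2 • m ≤ n) :
    (∏ k, ((n k : ℝ) - 2 * m k)) * KsumF R m
      ≤ ∑ i ∈ blockU n, ∑ j ∈ blockU n, R (i - j) := by
  set inner : Finset (Fin d → ℤ) := Icc (fun k => (m k : ℤ) + 1) fun k => (n k : ℤ) - m k
  have hinner {i} : i ∈ inner ↔ ∀ k, m k < i k ∧ i k ≤ n k - m k := by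
    simp only [inner, mem_Icc, Pi.le_def, forall_and, Int.add_one_le_iff]
  have hcard : (#inner : ℝ) = ∏ k, ((n k : ℝ) - 2 * m k) := by
    simp only [inner, Pi.card_Icc, Int.card_Icc, Nat.cast_prod]
    refine prod_congr rfl fun k _ => ?_
    have := hmn k
    simp only [Pi.smul_apply, smul_eq_mul] at this
    rw [show (n k : ℤ) - m k + 1 - (m k + 1) = ((n k - 2 * m k : ℕ) : ℤ) by omega,
      Int.toNat_natCast, Nat.cast_sub this]
    push_cast; ring
  have hsub : inner ⊆ blockU n := fun i hi => mem_blockU.2 fun k => by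
    have := (hinner.1 hi) k; constructor <;> omega
  calc (∏ k, ((n k : ℝ) - 2 * m k)) * KsumF R m = ∑ _i ∈ inner, KsumF R m := by
        simp [← hcard]
    _ ≤ ∑ i ∈ inner, ∑ j ∈ blockU n, R (i - j) :=
        sum_le_sum fun i hi => KsumF_le_sum_blockU_sub hR (hinner.1 hi)
    _ ≤ ∑ i ∈ blockU n, ∑ j ∈ blockU n, R (i - j) :=
        sum_le_sum_of_subset_of_nonneg hsub fun i _ _ => sum_nonneg fun j _ => hR _

lemma pow_mul_KsumF_div_le (hR : ∀ m, 0 ≤ R m) {a : ℕ} (ha : 2 ≤ a) {n : Fin d → ℕ}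
    (hn : ∀ k, a ≤ n k) (hKn : 0 < KsumF R n) :
    (1 - 2 / a) ^ d * (KsumF R (fun k => n k / a) / KsumF R (fun k => 2 * a * (n k / a)))
      ≤ (∑ i ∈ blockU n, ∑ j ∈ blockU n, R (i - j)) / ((∏ k, (n k : ℝ)) * KsumF R n) := by
  set m : Fin d → ℕ := fun k => n k / a
  have hprod : 0 < ∏ k, (n k : ℝ) := prod_pos fun k _ =>
    Nat.cast_pos.2 (by have := hn k; omega)
  have hmono : KsumF R n ≤ KsumF R (fun k => 2 * a * m k) :=
    KsumF_mono hR fun k => le_two_mul_mul_div (hn k) (by omega)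
  have h2m : 2 • m ≤ n := fun k => by
    simpa using (Nat.mul_le_mul_right (n k / a) ha).trans (Nat.mul_div_le (n k) a)
  have hpow : 0 ≤ (1 - 2 / a : ℝ) ^ d := pow_nonneg (one_sub_two_div_nonneg ha) d
  rw [le_div_iff₀ (mul_pos hprod hKn)]
  calc (1 - 2 / a) ^ d * (KsumF R m / KsumF R (fun k => 2 * a * m k))
        * ((∏ k, (n k : ℝ)) * KsumF R n)
      ≤ (1 - 2 / a) ^ d * (KsumF R m / KsumF R n) * ((∏ k, (n k : ℝ)) * KsumF R n) := by
        gcongr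
        exact KsumF_nonneg hR m
    _ = ((1 - 2 / a) ^ d * ∏ k, (n k : ℝ)) * KsumF R m := by field_simp
    _ ≤ (∏ k, ((n k : ℝ) - 2 * m k)) * KsumF R m :=
        mul_le_mul_of_nonneg_right (pow_mul_prod_le_prod_sub ha n) (KsumF_nonneg hR m)
    _ ≤ ∑ i ∈ blockU n, ∑ j ∈ blockU n, R (i - j) := prod_sub_two_mul_mul_KsumF_le hR h2m

theorem tendsto_sum_blockU_sub_div (hR : ∀ m, 0 ≤ R m) (hK : SlowlyVarying d (KsumF R)) :
    Tendsto (fun n : Fin d → ℕ =>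
      (∑ i ∈ blockU n, ∑ j ∈ blockU n, R (i - j)) / ((∏ k, (n k : ℝ)) * KsumF R n))
      atTop (𝓝 1) := by
  have hKpos : ∀ᶠ n in atTop, 0 < KsumF R n :=
    hK.eventually_ne_zero.mono fun n hn => (KsumF_nonneg hR n).lt_of_ne' hn
  refine tendsto_order.2 ⟨fun c hc => ?_, fun c hc => Eventually.of_forall fun n => ?_⟩
  · obtain ⟨a, hca, ha⟩ : ∃ a : ℕ, c < (1 - 2 / a : ℝ) ^ d ∧ 2 ≤ a :=
      (((tendsto_one_sub_two_div_pow d).eventually (lt_mem_nhds hc)).and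
        (eventually_ge_atTop 2)).exists
    have hlim := (hK.tendsto_div_comp_div (a := a) (b := 2 * a) (by omega) (by omega)).const_mul
      ((1 - 2 / a : ℝ) ^ d)
    rw [mul_one] at hlim
    filter_upwards [hlim.eventually (lt_mem_nhds hca), hKpos, eventually_ge_atTop fun _ => a]
      with n hlt hn ha'
    exact hlt.trans_le (pow_mul_KsumF_div_le hR ha ha' hn)
  · exact (div_le_one_of_le₀ (sum_blockU_sub_le hR n)
      (mul_nonneg (by positivity) (KsumF_nonneg hR n))).trans_lt hc

end BlockSums

theorem stmt2_general {Ω : Type*} [MeasurableSpace Ω] (μ : Measure Ω) [IsProbabilityMeasure μ]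
    {d : ℕ} (X : (Fin d → ℤ) → Ω → ℝ) (R : (Fin d → ℤ) → ℝ)
    (hL2 : ∀ j, MemLp (X j) 2 μ)
    (hcov : ∀ i j, cov μ (X i) (X j) = R (i - j)) (hR : ∀ m, 0 ≤ R m)
    (hK : SlowlyVarying d (KsumF R)) :
    Tendsto (fun n : Fin d → ℕ =>
        var μ (partialSum X n) / ((∏ k, (n k : ℝ)) * KsumF R n)) atTop (nhds 1) := by
  refine (tendsto_sum_blockU_sub_div hR hK).congr fun n => ?_
  rw [show var μ (partialSum X n) = _ from var_sum_eq_sum_sum_cov μ (blockU n) X hL2]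
  simp only [hcov]

/-- if the covariance function is nonnegative and `K_X` is slowly varying then
`Var S(U_n) ∼ ⟨n⟩ K_X(n)` as `n → ∞`. -/
theorem stmt2 {Ω : Type*} [MeasurableSpace Ω] (μ : Measure Ω) [IsProbabilityMeasure μ]
    {d : ℕ} (X : (Fin d → ℤ) → Ω → ℝ) (R : (Fin d → ℤ) → ℝ)
    (hmeas : ∀ j, Measurable (X j)) (hL2 : ∀ j, MemLp (X j) 2 μ)
    (hcov : ∀ i j, cov μ (X i) (X j) = R (i - j)) (hR : ∀ m, 0 ≤ R m)
    (hK : SlowlyVarying d (KsumF R)) :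
    Tendsto (fun n : Fin d → ℕ =>
        var μ (partialSum X n) / ((∏ k, (n k : ℝ)) * KsumF R n)) atTop (nhds 1) :=
  stmt2_general μ X R hL2 hcov hR hK
end

section
/- Let X = {X_j, j ∈ ℤᵈ} be a wide-sense stationary random field with nonnegative covariance function R(m) = cov(X_0, X_m). Then for every c ∈ (0,1) and every n ∈ ℕᵈ with n ≥ (1/(1−c))·(1,…,1) (so that c·n ≤ n − 1 coordinatewise), one has Var S(U_n) ≥ (1−c)ᵈ · ⟨n⟩ · K_X(⌊cn⌋), where K_X(m) = Σ_{−m ≤ j ≤ m} R(j) and ⌊cn⌋ denotes the coordinatewise integer part of (cn₁,…,cn_d). -/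
open MeasureTheory Filter ProbabilityTheory
open scoped Classical BigOperators

/-!
Expanding the variance, `Var S(U_n) = ∑_{i,j ∈ U_n} R(i - j)`. Grouping the pairs by their
difference `m = i - j` and dropping the (nonnegative) terms with `m ∉ [-⌊cn⌋, ⌊cn⌋]` leaves
`∑_m #{j ∈ U_n | m + j ∈ U_n} R(m)`. That count is `∏_k (n_k - |m_k|)`, and `|m_k| ≤ c n_k`
makes each factor at least `(1 - c) n_k`.
-/

open Finset

-- `cov μ X Y` unfolds to Mathlib's `cov[X, Y; μ]`.
lemma var_fun_sum {Ω ι : Type*} [MeasurableSpace Ω] {μ : Measure Ω} [IsFiniteMeasure μ]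
    {X : ι → Ω → ℝ} {s : Finset ι} (hX : ∀ i ∈ s, MemLp (X i) 2 μ) :
    var μ (fun ω => ∑ i ∈ s, X i ω) = ∑ i ∈ s, ∑ j ∈ s, cov μ (X i) (X j) :=
  covariance_fun_sum_fun_sum' hX hX

section AddGroup

variable {G : Type*} [AddGroup G] [DecidableEq G]

lemma card_filter_sub_eq (U : Finset G) (m : G) :
    #{p ∈ U ×ˢ U | p.1 - p.2 = m} = #{j ∈ U | m + j ∈ U} := by
  refine card_nbij' Prod.snd (fun j => (m + j, j)) ?_ ?_ ?_ fun _ _ => rfl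
  · intro p hp
    obtain ⟨hpU, rfl⟩ := mem_filter.1 hp
    simpa using (mem_product.1 hpU).symm
  · intro j hj
    obtain ⟨hj, hmj⟩ := mem_filter.1 hj
    simpa using And.intro hmj hj
  · intro p hp
    simp [← (mem_filter.1 hp).2]

lemma sum_card_filter_add_mem_mul_le (U I : Finset G) {R : G → ℝ} (hR : ∀ m, 0 ≤ R m) :
    ∑ m ∈ I, (#{j ∈ U | m + j ∈ U} : ℝ) * R m ≤ ∑ i ∈ U, ∑ j ∈ U, R (i - j) := by
  have hfiber : ∀ m ∈ I, (#{j ∈ U | m + j ∈ U} : ℝ) * R m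
      = ∑ p ∈ U ×ˢ U with p.1 - p.2 = m, R (p.1 - p.2) := by
    intro m _
    rw [← card_filter_sub_eq, sum_congr rfl fun p hp => congrArg R (mem_filter.1 hp).2,
      sum_const, nsmul_eq_mul]
  rw [sum_congr rfl hfiber, ← sum_product']
  exact sum_fiberwise_le_sum_of_sum_fiber_nonneg fun m _ => sum_nonneg fun p _ => hR _

end AddGroup

lemma filter_add_mem_blockU {d : ℕ} (n : Fin d → ℕ) (m : Fin d → ℤ) :
    {j ∈ blockU n | m + j ∈ blockU n}
      = Icc (fun k => max 1 (1 - m k)) (fun k => min (n k : ℤ) (n k - m k)) := by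
  ext j
  simp only [blockU, mem_filter, mem_Icc, Pi.le_def, Pi.add_apply, max_le_iff, le_min_iff]
  constructor
  · rintro ⟨⟨h1, h2⟩, h3, h4⟩
    exact ⟨fun k => ⟨h1 k, by linarith [h3 k]⟩, fun k => ⟨h2 k, by linarith [h4 k]⟩⟩
  · intro h
    exact ⟨⟨fun k => (h.1 k).1, fun k => (h.2 k).1⟩,
      fun k => by linarith [(h.1 k).2], fun k => by linarith [(h.2 k).2]⟩

lemma card_filter_add_mem_blockU {d : ℕ} (n : Fin d → ℕ) (m : Fin d → ℤ) :
    #{j ∈ blockU n | m + j ∈ blockU n} = ∏ k, ((n k : ℤ) - |m k|).toNat := by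
  rw [filter_add_mem_blockU, Pi.card_Icc]
  refine prod_congr rfl fun k _ => ?_
  rw [Int.card_Icc, abs_eq_max_neg]
  congr 1
  omega

lemma one_sub_mul_le_toNat_sub_abs {c : ℝ} (hc : 0 ≤ c) (N : ℕ) {a : ℤ}
    (ha : |a| ≤ ⌊c * N⌋₊) : (1 - c) * N ≤ (((N : ℤ) - |a|).toNat : ℝ) := by
  have ha' : ((|a| : ℤ) : ℝ) ≤ c * N :=
    (Int.cast_le.2 ha).trans (by exact_mod_cast Nat.floor_le (by positivity))
  push_cast at ha'
  calc (1 - c) * N ≤ ((N - |a| : ℤ) : ℝ) := by push_cast; linarith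
    _ ≤ _ := by exact_mod_cast Int.self_le_toNat _

lemma one_sub_pow_mul_prod_le_card_filter_add_mem_blockU {c : ℝ} (hc0 : 0 ≤ c) (hc1 : c ≤ 1)
    {d : ℕ} (n : Fin d → ℕ) {m : Fin d → ℤ}
    (hm : m ∈ Icc (fun k => -(⌊c * n k⌋₊ : ℤ)) (fun k => (⌊c * n k⌋₊ : ℤ))) :
    (1 - c) ^ d * ∏ k, (n k : ℝ) ≤ #{j ∈ blockU n | m + j ∈ blockU n} := by
  rw [card_filter_add_mem_blockU, Nat.cast_prod, ← Fin.prod_const d (1 - c), ← prod_mul_distrib]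
  refine prod_le_prod (fun k _ => by have := sub_nonneg.2 hc1; positivity) fun k _ => ?_
  exact one_sub_mul_le_toNat_sub_abs hc0 _
    (abs_le.2 ⟨(mem_Icc.1 hm).1 k, (mem_Icc.1 hm).2 k⟩)

theorem stmt5_general {Ω : Type*} [MeasurableSpace Ω] (μ : Measure Ω) [IsProbabilityMeasure μ]
    {d : ℕ} (X : (Fin d → ℤ) → Ω → ℝ) (R : (Fin d → ℤ) → ℝ)
    (hL2 : ∀ j, MemLp (X j) 2 μ)
    (hcov : ∀ i j, cov μ (X i) (X j) = R (i - j)) (hR : ∀ m, 0 ≤ R m) :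
    ∀ c : ℝ, 0 < c → c < 1 → ∀ n : Fin d → ℕ, (∀ k, 1 / (1 - c) ≤ (n k : ℝ)) →
      (1 - c) ^ d * (∏ k, (n k : ℝ)) * KsumF R (fun k => ⌊c * (n k : ℝ)⌋₊) ≤
        var μ (partialSum X n) := by
  intro c hc0 hc1 n _
  calc (1 - c) ^ d * (∏ k, (n k : ℝ)) * KsumF R (fun k => ⌊c * (n k : ℝ)⌋₊)
      ≤ ∑ m ∈ Icc (fun k => -(⌊c * n k⌋₊ : ℤ)) (fun k => (⌊c * n k⌋₊ : ℤ)),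
          (#{j ∈ blockU n | m + j ∈ blockU n} : ℝ) * R m := by
        rw [KsumF, mul_sum]
        exact sum_le_sum fun m hm => mul_le_mul_of_nonneg_right
          (one_sub_pow_mul_prod_le_card_filter_add_mem_blockU hc0.le hc1.le n hm) (hR m)
    _ ≤ ∑ i ∈ blockU n, ∑ j ∈ blockU n, R (i - j) := sum_card_filter_add_mem_mul_le _ _ hR
    _ = var μ (partialSum X n) := by
        unfold partialSum
        rw [var_fun_sum fun j _ => hL2 j]
        simp only [hcov]

/-- for `c ∈ (0,1)` and `n ≥ (1/(1-c))·1`,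
`Var S(U_n) ≥ (1-c)^d ⟨n⟩ K_X(⌊cn⌋)`. -/
theorem stmt5 {Ω : Type*} [MeasurableSpace Ω] (μ : Measure Ω) [IsProbabilityMeasure μ]
    {d : ℕ} (X : (Fin d → ℤ) → Ω → ℝ) (R : (Fin d → ℤ) → ℝ)
    (hmeas : ∀ j, Measurable (X j)) (hL2 : ∀ j, MemLp (X j) 2 μ)
    (hcov : ∀ i j, cov μ (X i) (X j) = R (i - j)) (hR : ∀ m, 0 ≤ R m) :
    ∀ c : ℝ, 0 < c → c < 1 → ∀ n : Fin d → ℕ, (∀ k, 1 / (1 - c) ≤ (n k : ℝ)) →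
      (1 - c) ^ d * (∏ k, (n k : ℝ)) * KsumF R (fun k => ⌊c * (n k : ℝ)⌋₊) ≤
        var μ (partialSum X n) :=
  stmt5_general μ X R hL2 hcov hR
end
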